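/- Let $\Lambda \subset \mathbb{R}^d$ be bounded with finite positive measure, let $(f_n)_{n\ge1}$ be functions in $L^2(\Lambda)$ such that $\sum_{n=1}^\infty |f_n(x)|^2 \le A^2$ for all $x \in \Lambda$. Let $(t_n)_{n\ge2}$ be square-summable scalars and, for $u>0$, let $t_u = e^{i\theta}\sqrt{\rho + u^2/\gamma}$ with fixed $\rho \ge 0$, $\theta \in [0,2\pi)$, $\gamma > 0$. Assume moreover $\|f_1\|_{L^2} > 0$. Define $\varphi_u = t_u f_1 + \sum_{n\ge2} t_n f_n$. Then $\sup_{x\in\Lambda} |\varphi_u(x)/\|\varphi_u\|_{L^2} - e^{i\theta} f_1(x)/\|f_1\|_{L^2}| \to 0$ as $u \to \infty$. -/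

import Mathlib

/-! The tail `g = ∑ₙ tₙ fₙ` is bounded on `Λ` by `(∑ |tₙ|² + A²)/2`, hence lies in `L²(Λ)`.
With `s = |t_u| = √(ρ + u²/γ)`, Minkowski's inequality gives `|‖φ_u‖₂ - s ‖f₁‖₂| ≤ ‖g‖₂`, so
`‖φ_u‖₂ → ∞`. Writing
`φ_u/‖φ_u‖₂ - e^{iθ} f₁/‖f₁‖₂ = e^{iθ} f₁ (s ‖f₁‖₂ - ‖φ_u‖₂)/(‖φ_u‖₂ ‖f₁‖₂) + g/‖φ_u‖₂`,
the difference is bounded on `Λ` by `(|A| ‖g‖₂/‖f₁‖₂ + sup |g|)/‖φ_u‖₂ → 0`. -/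

open MeasureTheory Filter Complex Topology

lemma summable_norm_mul_of_summable_sq {ι R : Type*} [SeminormedRing R] {a b : ι → R}
    (ha : Summable fun n => ‖a n‖ ^ 2) (hb : Summable fun n => ‖b n‖ ^ 2) :
    Summable fun n => ‖a n * b n‖ :=
  ((ha.add hb).div_const 2).of_nonneg_of_le (fun _ => norm_nonneg _) fun n =>
    (norm_mul_le _ _).trans (by nlinarith [sq_nonneg (‖a n‖ - ‖b n‖)])

lemma norm_tsum_mul_le_of_summable_sq {ι R : Type*} [NormedRing R] [CompleteSpace R]
    {a b : ι → R} (ha : Summable fun n => ‖a n‖ ^ 2) (hb : Summable fun n => ‖b n‖ ^ 2) :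
    ‖∑' n, a n * b n‖ ≤ (∑' n, ‖a n‖ ^ 2 + ∑' n, ‖b n‖ ^ 2) / 2 :=
  calc ‖∑' n, a n * b n‖ ≤ ∑' n, ‖a n * b n‖ :=
        norm_tsum_le_tsum_norm (summable_norm_mul_of_summable_sq ha hb)
    _ ≤ ∑' n, (‖a n‖ ^ 2 + ‖b n‖ ^ 2) / 2 :=
        (summable_norm_mul_of_summable_sq ha hb).tsum_le_tsum
          (fun n => (norm_mul_le _ _).trans (by nlinarith [sq_nonneg (‖a n‖ - ‖b n‖)]))
          ((ha.add hb).div_const 2)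
    _ = (∑' n, ‖a n‖ ^ 2 + ∑' n, ‖b n‖ ^ 2) / 2 := by
        rw [tsum_div_const, ha.tsum_add hb]

theorem MeasureTheory.MemLp.sqrt_integral_norm_sq_eq_norm_toLp {α E : Type*} [MeasurableSpace α]
    {μ : Measure α} [NormedAddCommGroup E] {f : α → E} (hf : MemLp f 2 μ) :
    Real.sqrt (∫ x, ‖f x‖ ^ 2 ∂μ) = ‖hf.toLp f‖ := by
  rw [Lp.norm_toLp, hf.eLpNorm_eq_integral_rpow_norm two_ne_zero ENNReal.ofNat_ne_top,
    ENNReal.toReal_ofReal (by positivity), Real.sqrt_eq_rpow]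
  norm_num

lemma abs_sqrt_integral_norm_smul_add_sq_sub_le {α 𝕜 E : Type*} [MeasurableSpace α] {μ : Measure α}
    [NormedField 𝕜] [NormedAddCommGroup E] [NormedSpace 𝕜 E] {f g : α → E}
    (hf : MemLp f 2 μ) (hg : MemLp g 2 μ) (c : 𝕜) :
    |Real.sqrt (∫ x, ‖c • f x + g x‖ ^ 2 ∂μ) - ‖c‖ * Real.sqrt (∫ x, ‖f x‖ ^ 2 ∂μ)|
      ≤ Real.sqrt (∫ x, ‖g x‖ ^ 2 ∂μ) := by
  have hsum : MemLp (c • f + g) 2 μ := (hf.const_smul c).add hg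
  rw [show (∫ x, ‖c • f x + g x‖ ^ 2 ∂μ) = ∫ x, ‖(c • f + g) x‖ ^ 2 ∂μ from rfl,
    hsum.sqrt_integral_norm_sq_eq_norm_toLp, hf.sqrt_integral_norm_sq_eq_norm_toLp,
    hg.sqrt_integral_norm_sq_eq_norm_toLp, MemLp.toLp_add (hf.const_smul c) hg,
    MemLp.toLp_const_smul, ← norm_smul]
  simpa using abs_norm_sub_norm_le (c • hf.toLp f + hg.toLp g) (c • hf.toLp f)

lemma norm_smul_add_div_sub_div_le {𝕜 : Type*} [RCLike 𝕜] (e a b : 𝕜) {s N F : ℝ} (he : ‖e‖ = 1)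
    (hN : 0 < N) (hF : 0 < F) :
    ‖(e * s * a + b) / N - e * a / F‖ ≤ ‖a‖ * |s * F - N| / (N * F) + ‖b‖ / N := by
  have hsplit : (e * s * a + b) / N - e * a / F = e * a * ((s * F - N) / (N * F) : ℝ) + b / N := by
    have : (N : 𝕜) ≠ 0 := by exact_mod_cast hN.ne'
    have : (F : 𝕜) ≠ 0 := by exact_mod_cast hF.ne'
    push_cast
    field_simp
    ring
  rw [hsplit]
  refine (norm_add_le _ _).trans (le_of_eq ?_)
  rw [norm_mul, norm_mul, he, RCLike.norm_ofReal, abs_div, abs_of_pos (mul_pos hN hF), norm_div,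
    RCLike.norm_ofReal, abs_of_pos hN]
  ring

lemma exists_forall_ge_norm_sub_le_of_tendsto {ι α E : Type*} [Nonempty ι] [SemilatticeSup ι]
    [SeminormedAddCommGroup E] {F : ι → α → E} {G : α → E} {s : Set α} {D : ι → ℝ}
    (hD : Tendsto D atTop (𝓝 0)) (hFG : ∀ᶠ u in atTop, ∀ x ∈ s, ‖F u x - G x‖ ≤ D u) :
    ∀ ε > 0, ∃ U, ∀ u ≥ U, ∀ x ∈ s, ‖F u x - G x‖ ≤ ε := by
  intro ε hε
  obtain ⟨U, hU⟩ := eventually_atTop.1 (hFG.and (hD.eventually (ge_mem_nhds hε)))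
  exact ⟨U, fun u hu x hx => ((hU u hu).1 x hx).trans (hU u hu).2⟩

theorem stmt_12_general {d : ℕ} (Λ : Set (EuclideanSpace ℝ (Fin d)))
    (hΛmeas : MeasurableSet Λ) (hΛbdd : Bornology.IsBounded Λ)
    (f₁ : EuclideanSpace ℝ (Fin d) → ℂ) (fn : ℕ → EuclideanSpace ℝ (Fin d) → ℂ)
    (hf₁meas : Measurable f₁) (hfnmeas : ∀ n, Measurable (fn n))
    (A : ℝ)
    (hptsum : ∀ x ∈ Λ, Summable fun n => ‖fn n x‖ ^ 2)
    (hptbound : ∀ x ∈ Λ, ‖f₁ x‖ ^ 2 + (∑' n, ‖fn n x‖ ^ 2) ≤ A ^ 2)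
    (t : ℕ → ℂ) (ht : Summable fun n => ‖t n‖ ^ 2)
    (ρ θ γ : ℝ) (hγ : 0 < γ)
    (tu : ℝ → ℂ)
    (htu : ∀ u, tu u = Complex.exp (θ * I) * (Real.sqrt (ρ + u ^ 2 / γ) : ℂ))
    (φ : ℝ → EuclideanSpace ℝ (Fin d) → ℂ)
    (hφ : ∀ u x, φ u x = tu u * f₁ x + ∑' n, t n * fn n x)
    (nrm : (EuclideanSpace ℝ (Fin d) → ℂ) → ℝ)
    (hnrm : ∀ h, nrm h = Real.sqrt (∫ x in Λ, ‖h x‖ ^ 2 ∂volume))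
    (hf₁pos : 0 < nrm f₁) :
    ∀ ε > 0, ∃ U : ℝ, ∀ u ≥ U, ∀ x ∈ Λ,
      ‖φ u x / (nrm (φ u) : ℂ)
        - Complex.exp (θ * I) * f₁ x / (nrm f₁ : ℂ)‖ ≤ ε := by
  set g := fun x => ∑' n, t n * fn n x
  have : IsFiniteMeasure (volume.restrict Λ) :=
    isFiniteMeasure_restrict.2 hΛbdd.measure_lt_top.ne
  have htail_nonneg : ∀ x, 0 ≤ ∑' n, ‖fn n x‖ ^ 2 := fun x => tsum_nonneg fun n => sq_nonneg _
  have hf₁A : ∀ x ∈ Λ, ‖f₁ x‖ ≤ |A| := fun x hx => by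
    simpa using sq_le_sq.1 (show ‖f₁ x‖ ^ 2 ≤ A ^ 2 by linarith [hptbound x hx, htail_nonneg x])
  obtain ⟨B, hgB⟩ : ∃ B, ∀ x ∈ Λ, ‖g x‖ ≤ B := ⟨(∑' n, ‖t n‖ ^ 2 + A ^ 2) / 2, fun x hx =>
    (norm_tsum_mul_le_of_summable_sq ht (hptsum x hx)).trans
      (by linarith [hptbound x hx, sq_nonneg ‖f₁ x‖])⟩
  have hf₁L2 : MemLp f₁ 2 (volume.restrict Λ) :=
    .of_bound hf₁meas.aestronglyMeasurable _ ((ae_restrict_iff' hΛmeas).2 (.of_forall hf₁A))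
  have hgL2 : MemLp g 2 (volume.restrict Λ) :=
    .of_bound (StronglyMeasurable.tsum fun n =>
        ((hfnmeas n).const_mul (t n)).stronglyMeasurable).aestronglyMeasurable _
      ((ae_restrict_iff' hΛmeas).2 (.of_forall hgB))
  have hφnrm : ∀ u, |nrm (φ u) - Real.sqrt (ρ + u ^ 2 / γ) * nrm f₁| ≤ nrm g := fun u => by
    have htu_norm : ‖tu u‖ = Real.sqrt (ρ + u ^ 2 / γ) := by
      rw [htu, norm_mul, norm_exp_ofReal_mul_I, one_mul, norm_real,
        Real.norm_of_nonneg (Real.sqrt_nonneg _)]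
    rw [hnrm, hnrm, hnrm, funext (hφ u), ← htu_norm]
    exact abs_sqrt_integral_norm_smul_add_sq_sub_le hf₁L2 hgL2 (tu u)
  have hsqrt : Tendsto (fun u : ℝ => Real.sqrt (ρ + u ^ 2 / γ)) atTop atTop :=
    Real.tendsto_sqrt_atTop.comp (tendsto_atTop_add_const_left _ ρ
      ((tendsto_pow_atTop two_ne_zero).atTop_div_const hγ))
  have hNtop : Tendsto (fun u => nrm (φ u)) atTop atTop :=
    tendsto_atTop_mono (fun u => by linarith [(abs_le.1 (hφnrm u)).1])
      (tendsto_atTop_add_const_right _ (-nrm g) (hsqrt.atTop_mul_const hf₁pos))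
  refine exists_forall_ge_norm_sub_le_of_tendsto
    (D := fun u => (|A| * nrm g / nrm f₁ + B) / nrm (φ u)) (tendsto_const_nhds.div_atTop hNtop) ?_
  filter_upwards [hNtop.eventually_gt_atTop 0] with u hN x hx
  rw [hφ, htu]
  calc _ ≤ ‖f₁ x‖ * |Real.sqrt (ρ + u ^ 2 / γ) * nrm f₁ - nrm (φ u)| / (nrm (φ u) * nrm f₁)
          + ‖g x‖ / nrm (φ u) :=
        norm_smul_add_div_sub_div_le _ _ _ (norm_exp_ofReal_mul_I θ) hN hf₁pos
    _ ≤ |A| * nrm g / (nrm (φ u) * nrm f₁) + B / nrm (φ u) := by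
        rw [abs_sub_comm]
        gcongr
        exacts [hf₁A x hx, hφnrm u, hgB x hx]
    _ = (|A| * nrm g / nrm f₁ + B) / nrm (φ u) := by
        field_simp

/-- Deterministic (pathwise) version of Proposition 2: with a leading mode `f₁`,
tail modes `fn n` satisfying the uniform pointwise variance bound
`‖f₁ x‖² + ∑ ‖fn n x‖² ≤ A²`, square-summable tail coefficients `t n`, and
conditioned leading coefficient `t_u = e^{iθ}√(ρ + u²/γ)`, the `L²`-normalized
field `φ_u` converges uniformly on `Λ` to the non-random profile
`e^{iθ} f₁/‖f₁‖₂` as `u → ∞`. -/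
theorem stmt_12 {d : ℕ} (Λ : Set (EuclideanSpace ℝ (Fin d)))
    (hΛmeas : MeasurableSet Λ) (hΛbdd : Bornology.IsBounded Λ)
    (hΛpos : 0 < volume Λ)
    (f₁ : EuclideanSpace ℝ (Fin d) → ℂ) (fn : ℕ → EuclideanSpace ℝ (Fin d) → ℂ)
    (hf₁meas : Measurable f₁) (hfnmeas : ∀ n, Measurable (fn n))
    (A : ℝ) (hA : 0 < A)
    (hptsum : ∀ x ∈ Λ, Summable fun n => ‖fn n x‖ ^ 2)
    (hptbound : ∀ x ∈ Λ, ‖f₁ x‖ ^ 2 + (∑' n, ‖fn n x‖ ^ 2) ≤ A ^ 2)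
    (t : ℕ → ℂ) (ht : Summable fun n => ‖t n‖ ^ 2)
    (ρ θ γ : ℝ) (hρ : 0 ≤ ρ) (hθ : θ ∈ Set.Ico (0 : ℝ) (2 * Real.pi)) (hγ : 0 < γ)
    (tu : ℝ → ℂ)
    (htu : ∀ u, tu u = Complex.exp (θ * I) * (Real.sqrt (ρ + u ^ 2 / γ) : ℂ))
    (φ : ℝ → EuclideanSpace ℝ (Fin d) → ℂ)
    (hφ : ∀ u x, φ u x = tu u * f₁ x + ∑' n, t n * fn n x)
    (nrm : (EuclideanSpace ℝ (Fin d) → ℂ) → ℝ)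
    (hnrm : ∀ h, nrm h = Real.sqrt (∫ x in Λ, ‖h x‖ ^ 2 ∂volume))
    (hf₁pos : 0 < nrm f₁) :
    ∀ ε > 0, ∃ U : ℝ, ∀ u ≥ U, ∀ x ∈ Λ,
      ‖φ u x / (nrm (φ u) : ℂ)
        - Complex.exp (θ * I) * f₁ x / (nrm f₁ : ℂ)‖ ≤ ε :=
  stmt_12_general Λ hΛmeas hΛbdd f₁ fn hf₁meas hfnmeas A hptsum hptbound t ht ρ θ γ hγ tu htu φ hφ
    nrm hnrm hf₁pos
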